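/- arXiv:1602.02512 — 5 statements merged into one kernel-verified Lean document; each statement's English description precedes it below -/
import Mathlib

section
/- Let U ⊆ ℂ be a nonempty connected open set, let a, b, c : U → ℂ be holomorphic, and let w₁, w₂, w₃, w₄ : U → ℂ be holomorphic solutions of the Riccati equation w′(z) = a(z) + b(z)·w(z) + c(z)·w(z)² that are pairwise distinct at every point of U (i.e. wᵢ(z) ≠ wⱼ(z) for all z ∈ U and all i ≠ j). Then the cross-ratio z ↦ ((w₁(z) − w₃(z))·(w₂(z) − w₄(z))) / ((w₁(z) − w₄(z))·(w₂(z) − w₃(z))) is constant on U. -/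
/-!
The difference of two solutions of `w′ = a + b w + c w²` satisfies the linear equation
`(w₁ - w₂)′ = (b + c (w₁ + w₂)) (w₁ - w₂)`. Hence numerator and denominator of the cross-ratio
have the same logarithmic derivative `2b + c (w₁ + w₂ + w₃ + w₄)`, so their quotient has
derivative zero, and it is constant on the connected open set `U`.
-/

section Riccati

variable {𝕜 : Type*} [NontriviallyNormedField 𝕜]

theorem HasDerivAt.sub_of_riccati {f g : 𝕜 → 𝕜} {α β γ z : 𝕜}
    (hf : HasDerivAt f (α + β * f z + γ * f z ^ 2) z)
    (hg : HasDerivAt g (α + β * g z + γ * g z ^ 2) z) :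
    HasDerivAt (fun x => f x - g x) ((β + γ * (f z + g z)) * (f z - g z)) z :=
  (hf.sub hg).congr_deriv (by ring)

theorem HasDerivAt.div_eq_zero_of_logDeriv_eq {N D : 𝕜 → 𝕜} {μ z : 𝕜}
    (hN : HasDerivAt N (μ * N z) z) (hD : HasDerivAt D (μ * D z) z) (hD₀ : D z ≠ 0) :
    HasDerivAt (fun x => N x / D x) 0 z :=
  (hN.div hD hD₀).congr_deriv (by rw [div_eq_zero_iff]; left; ring)

theorem hasDerivAt_cross_ratio_of_riccati {w₁ w₂ w₃ w₄ : 𝕜 → 𝕜} {α β γ z : 𝕜}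
    (h₁ : HasDerivAt w₁ (α + β * w₁ z + γ * w₁ z ^ 2) z)
    (h₂ : HasDerivAt w₂ (α + β * w₂ z + γ * w₂ z ^ 2) z)
    (h₃ : HasDerivAt w₃ (α + β * w₃ z + γ * w₃ z ^ 2) z)
    (h₄ : HasDerivAt w₄ (α + β * w₄ z + γ * w₄ z ^ 2) z)
    (h₁₄ : w₁ z ≠ w₄ z) (h₂₃ : w₂ z ≠ w₃ z) :
    HasDerivAt (fun x => ((w₁ x - w₃ x) * (w₂ x - w₄ x)) / ((w₁ x - w₄ x) * (w₂ x - w₃ x)))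
      0 z := by
  have hN := (h₁.sub_of_riccati h₃).mul (h₂.sub_of_riccati h₄)
  have hD := (h₁.sub_of_riccati h₄).mul (h₂.sub_of_riccati h₃)
  refine HasDerivAt.div_eq_zero_of_logDeriv_eq (μ := 2 * β + γ * (w₁ z + w₂ z + w₃ z + w₄ z))
    (hN.congr_deriv (by ring)) (hD.congr_deriv (by ring)) ?_
  exact mul_ne_zero (sub_ne_zero.2 h₁₄) (sub_ne_zero.2 h₂₃)

end Riccati

theorem riccati_cross_ratio_constant_general
    (U : Set ℂ) (hU : IsOpen U) (hUconn : IsConnected U)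
    (a b c : ℂ → ℂ)
    (w₁ w₂ w₃ w₄ : ℂ → ℂ)
    (hode₁ : ∀ z ∈ U, HasDerivAt w₁ (a z + b z * w₁ z + c z * (w₁ z) ^ 2) z)
    (hode₂ : ∀ z ∈ U, HasDerivAt w₂ (a z + b z * w₂ z + c z * (w₂ z) ^ 2) z)
    (hode₃ : ∀ z ∈ U, HasDerivAt w₃ (a z + b z * w₃ z + c z * (w₃ z) ^ 2) z)
    (hode₄ : ∀ z ∈ U, HasDerivAt w₄ (a z + b z * w₄ z + c z * (w₄ z) ^ 2) z)
    (hdist : ∀ z ∈ U, w₁ z ≠ w₂ z ∧ w₁ z ≠ w₃ z ∧ w₁ z ≠ w₄ z ∧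
      w₂ z ≠ w₃ z ∧ w₂ z ≠ w₄ z ∧ w₃ z ≠ w₄ z) :
    ∃ k : ℂ, ∀ z ∈ U,
      ((w₁ z - w₃ z) * (w₂ z - w₄ z)) / ((w₁ z - w₄ z) * (w₂ z - w₃ z)) = k := by
  have hderiv : ∀ z ∈ U, HasDerivAt
      (fun x => ((w₁ x - w₃ x) * (w₂ x - w₄ x)) / ((w₁ x - w₄ x) * (w₂ x - w₃ x))) 0 z :=
    fun z hz => hasDerivAt_cross_ratio_of_riccati (hode₁ z hz) (hode₂ z hz) (hode₃ z hz)
      (hode₄ z hz) (hdist z hz).2.2.1 (hdist z hz).2.2.2.1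
  exact hU.exists_is_const_of_deriv_eq_zero hUconn.isPreconnected
    (fun z hz => (hderiv z hz).differentiableAt.differentiableWithinAt)
    (fun z hz => (hderiv z hz).deriv)

/-- **Cross-ratio of four Riccati solutions is constant.**
If `w₁, w₂, w₃, w₄` are holomorphic solutions on a nonempty connected open set
`U ⊆ ℂ` of the Riccati equation `w′ = a + b·w + c·w²` (with holomorphic
coefficients) which are pairwise distinct at every point of `U`, then their
cross-ratio is constant on `U`. -/
theorem riccati_cross_ratio_constant
    (U : Set ℂ) (hU : IsOpen U) (hUconn : IsConnected U)
    (a b c : ℂ → ℂ)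
    (ha : DifferentiableOn ℂ a U) (hb : DifferentiableOn ℂ b U)
    (hc : DifferentiableOn ℂ c U)
    (w₁ w₂ w₃ w₄ : ℂ → ℂ)
    (hw₁ : DifferentiableOn ℂ w₁ U) (hw₂ : DifferentiableOn ℂ w₂ U)
    (hw₃ : DifferentiableOn ℂ w₃ U) (hw₄ : DifferentiableOn ℂ w₄ U)
    (hode₁ : ∀ z ∈ U, HasDerivAt w₁ (a z + b z * w₁ z + c z * (w₁ z) ^ 2) z)
    (hode₂ : ∀ z ∈ U, HasDerivAt w₂ (a z + b z * w₂ z + c z * (w₂ z) ^ 2) z)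
    (hode₃ : ∀ z ∈ U, HasDerivAt w₃ (a z + b z * w₃ z + c z * (w₃ z) ^ 2) z)
    (hode₄ : ∀ z ∈ U, HasDerivAt w₄ (a z + b z * w₄ z + c z * (w₄ z) ^ 2) z)
    (hdist : ∀ z ∈ U, w₁ z ≠ w₂ z ∧ w₁ z ≠ w₃ z ∧ w₁ z ≠ w₄ z ∧
      w₂ z ≠ w₃ z ∧ w₂ z ≠ w₄ z ∧ w₃ z ≠ w₄ z) :
    ∃ k : ℂ, ∀ z ∈ U,
      ((w₁ z - w₃ z) * (w₂ z - w₄ z)) / ((w₁ z - w₄ z) * (w₂ z - w₃ z)) = k :=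
  riccati_cross_ratio_constant_general U hU hUconn a b c w₁ w₂ w₃ w₄ hode₁ hode₂ hode₃ hode₄ hdist
end

section
/- Let U ⊆ ℂ be a nonempty connected open set, let a, b, c : U → ℂ be holomorphic, and let φ₁, φ₂, φ₃ : U → ℂ be holomorphic solutions of the Riccati equation w′ = a(z) + b(z)w + c(z)w² that are pairwise distinct at every point of U and are each algebraic over ℂ(z), i.e. for each i there is a nonzero polynomial Qᵢ ∈ ℂ[z, y] with Qᵢ(z, φᵢ(z)) = 0 for all z ∈ U. Then every holomorphic solution t : U → ℂ of the same equation with t(z) ∉ {φ₁(z), φ₂(z), φ₃(z)} for all z ∈ U is also algebraic over ℂ(z), i.e. there is a nonzero polynomial Q ∈ ℂ[z, y] with Q(z, t(z)) = 0 for all z ∈ U. -/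
open Complex

/-- A function `f` on `U` is algebraic over `ℂ(z)` if some nonzero two-variable
polynomial `Q ∈ ℂ[z, y]` satisfies `Q(z, f z) = 0` on `U`. -/
def IsAlgebraicOverRatFns (U : Set ℂ) (f : ℂ → ℂ) : Prop :=
  ∃ Q : MvPolynomial (Fin 2) ℂ, Q ≠ 0 ∧
    ∀ z ∈ U, MvPolynomial.eval ![z, f z] Q = 0

/-!
The cross ratio of four solutions of a Riccati equation has derivative zero (the equation is the
infinitesimal form of a Möbius flow), so on a connected domain it is a constant `k`. Solving
`CR(t, φ₁, φ₂, φ₃) = k` for `t` writes `t · D = N`, where `D` and `N` are polynomials in `k` and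
the `φᵢ` and `D` vanishes nowhere. In the ring of functions `U → ℂ`, viewed as a `ℂ[z]`-algebra,
the algebraic elements form a subring and `D` is a unit, so `t` is algebraic.
-/

open Polynomial Polynomial.Bivariate

section CrossRatio

variable {K : Type*} [Field K]

def crossRatio (w x y z : K) : K := (w - x) * (z - y) / ((w - y) * (z - x))

theorem mul_sub_eq_of_crossRatio_eq {t x y z k : K} (hty : t ≠ y) (hxz : x ≠ z)
    (h : crossRatio t x y z = k) :
    t * ((z - y) - k * (z - x)) = x * (z - y) - k * (y * (z - x)) := by
  rw [crossRatio, div_eq_iff (mul_ne_zero (sub_ne_zero.2 hty) (sub_ne_zero.2 hxz.symm))] at h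
  linear_combination h

theorem sub_sub_mul_ne_zero_of_crossRatio_eq {t x y z k : K} (htx : t ≠ x) (hty : t ≠ y)
    (hxy : x ≠ y) (hxz : x ≠ z) (hyz : y ≠ z) (h : crossRatio t x y z = k) :
    (z - y) - k * (z - x) ≠ 0 := by
  have hk : k ≠ 0 := h ▸ div_ne_zero
    (mul_ne_zero (sub_ne_zero.2 htx) (sub_ne_zero.2 hyz.symm))
    (mul_ne_zero (sub_ne_zero.2 hty) (sub_ne_zero.2 hxz.symm))
  intro hD
  have hrel := mul_sub_eq_of_crossRatio_eq hty hxz h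
  have hprod : k * ((z - x) * (y - x)) = 0 := by linear_combination hrel - (t - x) * hD
  simp only [mul_eq_zero, sub_eq_zero] at hprod
  tauto

end CrossRatio

section Riccati

variable {𝕜 : Type*} [RCLike 𝕜]

def IsRiccatiSolution (U : Set 𝕜) (a b c f : 𝕜 → 𝕜) : Prop :=
  ∀ z ∈ U, HasDerivAt f (a z + b z * f z + c z * f z ^ 2) z

theorem hasDerivAt_crossRatio_of_riccati {f₁ f₂ f₃ f₄ : 𝕜 → 𝕜} {a b c z : 𝕜}
    (h₁ : HasDerivAt f₁ (a + b * f₁ z + c * f₁ z ^ 2) z)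
    (h₂ : HasDerivAt f₂ (a + b * f₂ z + c * f₂ z ^ 2) z)
    (h₃ : HasDerivAt f₃ (a + b * f₃ z + c * f₃ z ^ 2) z)
    (h₄ : HasDerivAt f₄ (a + b * f₄ z + c * f₄ z ^ 2) z)
    (hne : (f₁ z - f₃ z) * (f₄ z - f₂ z) ≠ 0) :
    HasDerivAt (fun w => crossRatio (f₁ w) (f₂ w) (f₃ w) (f₄ w)) 0 z := by
  refine (((h₁.sub h₂).mul (h₄.sub h₃)).div ((h₁.sub h₃).mul (h₄.sub h₂)) hne).congr_deriv ?_
  rw [div_eq_zero_iff]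
  left
  simp only [Pi.sub_apply, Pi.mul_apply]
  ring

theorem IsOpen.exists_crossRatio_eq_of_riccati {U : Set 𝕜} (hU : IsOpen U)
    (hUc : IsPreconnected U) {a b c f₁ f₂ f₃ f₄ : 𝕜 → 𝕜}
    (h₁ : IsRiccatiSolution U a b c f₁) (h₂ : IsRiccatiSolution U a b c f₂)
    (h₃ : IsRiccatiSolution U a b c f₃) (h₄ : IsRiccatiSolution U a b c f₄)
    (hne : ∀ z ∈ U, f₁ z ≠ f₃ z ∧ f₂ z ≠ f₄ z) :
    ∃ k, ∀ z ∈ U, crossRatio (f₁ z) (f₂ z) (f₃ z) (f₄ z) = k := by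
  have hderiv : ∀ z ∈ U, HasDerivAt (fun w => crossRatio (f₁ w) (f₂ w) (f₃ w) (f₄ w)) 0 z :=
    fun z hz => hasDerivAt_crossRatio_of_riccati (h₁ z hz) (h₂ z hz) (h₃ z hz) (h₄ z hz)
      (mul_ne_zero (sub_ne_zero.2 (hne z hz).1) (sub_ne_zero.2 (hne z hz).2.symm))
  exact hU.exists_is_const_of_deriv_eq_zero hUc
    (fun z hz => (hderiv z hz).differentiableAt.differentiableWithinAt)
    (fun z hz => (hderiv z hz).deriv)

end Riccati

/-- `p ∈ R[X]` acts on functions `U → R` as multiplication by `z ↦ p(z)`, so that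
`IsAlgebraic R[X] g` says that `g` is an algebraic function on `U`. -/
@[reducible]
noncomputable def Polynomial.algebraSetPi {R : Type*} [CommRing R] (U : Set R) :
    Algebra R[X] (U → R) :=
  (RingHom.pi fun z : U => evalRingHom (z : R)).toAlgebra

attribute [local instance] Polynomial.algebraSetPi

section AlgebraicFunctions

variable {R : Type*} [CommRing R]

theorem Polynomial.aeval_setPi_apply {U : Set R} (g : U → R) (p : R[X][Y]) (z : U) :
    aeval g p z = p.evalEval (z : R) (g z) := by
  change Pi.evalRingHom _ z (eval₂ (algebraMap R[X] (U → R)) g p) = _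
  rw [hom_eval₂, ← eval₂_evalRingHom]
  rfl

theorem Polynomial.Bivariate.eval_equivMvPolynomial (p : R[X][Y]) (x y : R) :
    MvPolynomial.eval ![x, y] (equivMvPolynomial R p) = p.evalEval x y := by
  suffices h : (MvPolynomial.eval ![x, y]).comp
      (equivMvPolynomial R : R[X][Y] →+* MvPolynomial (Fin 2) R) = evalEvalRingHom x y from
    RingHom.congr_fun h p
  ext <;> simp

theorem isAlgebraicOverRatFns_iff_isAlgebraic {U : Set ℂ} {f : ℂ → ℂ} :
    IsAlgebraicOverRatFns U f ↔ IsAlgebraic ℂ[X] (U.domRestrict f) := by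
  constructor
  · rintro ⟨Q, hQ, hQf⟩
    refine ⟨(equivMvPolynomial ℂ).symm Q, by simpa using hQ, funext fun z => ?_⟩
    rw [aeval_setPi_apply, ← eval_equivMvPolynomial, AlgEquiv.apply_symm_apply]
    exact hQf z z.2
  · rintro ⟨p, hp, hpf⟩
    refine ⟨equivMvPolynomial ℂ p, by simpa using hp, fun z hz => ?_⟩
    rw [eval_equivMvPolynomial]
    simpa only [aeval_setPi_apply, Set.domRestrict_apply, Pi.zero_apply] using
      congrFun hpf ⟨z, hz⟩

end AlgebraicFunctions

theorem riccati_three_algebraic_solutions_forces_algebraic_general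
    (U : Set ℂ) (hU : IsOpen U) (hUconn : IsConnected U)
    (a b c : ℂ → ℂ)
    (φ₁ φ₂ φ₃ : ℂ → ℂ)
    (hode₁ : ∀ z ∈ U, HasDerivAt φ₁ (a z + b z * φ₁ z + c z * (φ₁ z) ^ 2) z)
    (hode₂ : ∀ z ∈ U, HasDerivAt φ₂ (a z + b z * φ₂ z + c z * (φ₂ z) ^ 2) z)
    (hode₃ : ∀ z ∈ U, HasDerivAt φ₃ (a z + b z * φ₃ z + c z * (φ₃ z) ^ 2) z)
    (hdist : ∀ z ∈ U, φ₁ z ≠ φ₂ z ∧ φ₁ z ≠ φ₃ z ∧ φ₂ z ≠ φ₃ z)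
    (halg₁ : IsAlgebraicOverRatFns U φ₁) (halg₂ : IsAlgebraicOverRatFns U φ₂)
    (halg₃ : IsAlgebraicOverRatFns U φ₃)
    (t : ℂ → ℂ)
    (hodet : ∀ z ∈ U, HasDerivAt t (a z + b z * t z + c z * (t z) ^ 2) z)
    (htdist : ∀ z ∈ U, t z ≠ φ₁ z ∧ t z ≠ φ₂ z ∧ t z ≠ φ₃ z) :
    IsAlgebraicOverRatFns U t := by
  obtain ⟨k, hk⟩ := hU.exists_crossRatio_eq_of_riccati hUconn.isPreconnected hodet hode₁ hode₂
    hode₃ fun z hz => ⟨(htdist z hz).2.1, (hdist z hz).2.1⟩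
  rw [isAlgebraicOverRatFns_iff_isAlgebraic] at halg₁ halg₂ halg₃ ⊢
  set f₁ := U.domRestrict φ₁
  set f₂ := U.domRestrict φ₂
  set f₃ := U.domRestrict φ₃
  set κ : U → ℂ := algebraMap ℂ[X] (U → ℂ) (C k)
  have hκ : ∀ z, κ z = k := fun z => eval_C
  set D := (f₃ - f₂) - κ * (f₃ - f₁)
  have hD : IsUnit D := Pi.isUnit_iff.2 fun z => by
    obtain ⟨h₁₂, h₁₃, h₂₃⟩ := hdist z z.2
    obtain ⟨ht₁, ht₂, -⟩ := htdist z z.2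
    simpa [D, f₁, f₂, f₃, hκ] using
      (sub_sub_mul_ne_zero_of_crossRatio_eq ht₁ ht₂ h₁₂ h₁₃ h₂₃ (hk z z.2)).isUnit
  have hDt : D * U.domRestrict t = f₁ * (f₃ - f₂) - κ * (f₂ * (f₃ - f₁)) := funext fun z => by
    simpa [D, f₁, f₂, f₃, hκ, mul_comm] using
      mul_sub_eq_of_crossRatio_eq (htdist z z.2).2.1 (hdist z z.2).2.1 (hk z z.2)
  have hκalg : IsAlgebraic ℂ[X] κ := isAlgebraic_algebraMap _
  refine IsAlgebraic.of_mul hD.mem_nonZeroDivisors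
    ((halg₃.sub halg₂).sub (hκalg.mul (halg₃.sub halg₁))) ?_
  rw [hDt]
  exact (halg₁.mul (halg₃.sub halg₂)).sub (hκalg.mul (halg₂.mul (halg₃.sub halg₁)))

/-- If a Riccati equation `w′ = a + b·w + c·w²` on a nonempty connected open set
`U ⊆ ℂ` has three holomorphic solutions `φ₁, φ₂, φ₃`, pairwise distinct at every
point of `U`, which are algebraic over `ℂ(z)`, then every holomorphic solution
`t` with `t(z) ∉ {φ₁(z), φ₂(z), φ₃(z)}` on `U` is also algebraic over `ℂ(z)`. -/
theorem riccati_three_algebraic_solutions_forces_algebraic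
    (U : Set ℂ) (hU : IsOpen U) (hUconn : IsConnected U)
    (a b c : ℂ → ℂ)
    (ha : DifferentiableOn ℂ a U) (hb : DifferentiableOn ℂ b U)
    (hc : DifferentiableOn ℂ c U)
    (φ₁ φ₂ φ₃ : ℂ → ℂ)
    (hφ₁ : DifferentiableOn ℂ φ₁ U) (hφ₂ : DifferentiableOn ℂ φ₂ U)
    (hφ₃ : DifferentiableOn ℂ φ₃ U)
    (hode₁ : ∀ z ∈ U, HasDerivAt φ₁ (a z + b z * φ₁ z + c z * (φ₁ z) ^ 2) z)
    (hode₂ : ∀ z ∈ U, HasDerivAt φ₂ (a z + b z * φ₂ z + c z * (φ₂ z) ^ 2) z)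
    (hode₃ : ∀ z ∈ U, HasDerivAt φ₃ (a z + b z * φ₃ z + c z * (φ₃ z) ^ 2) z)
    (hdist : ∀ z ∈ U, φ₁ z ≠ φ₂ z ∧ φ₁ z ≠ φ₃ z ∧ φ₂ z ≠ φ₃ z)
    (halg₁ : IsAlgebraicOverRatFns U φ₁) (halg₂ : IsAlgebraicOverRatFns U φ₂)
    (halg₃ : IsAlgebraicOverRatFns U φ₃)
    (t : ℂ → ℂ) (ht : DifferentiableOn ℂ t U)
    (hodet : ∀ z ∈ U, HasDerivAt t (a z + b z * t z + c z * (t z) ^ 2) z)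
    (htdist : ∀ z ∈ U, t z ≠ φ₁ z ∧ t z ≠ φ₂ z ∧ t z ≠ φ₃ z) :
    IsAlgebraicOverRatFns U t :=
  riccati_three_algebraic_solutions_forces_algebraic_general U hU hUconn a b c φ₁ φ₂ φ₃ hode₁ hode₂
    hode₃ hdist halg₁ halg₂ halg₃ t hodet htdist
end

section
/- Let D ⊆ ℂ be an open disc centred at p, let P : D → ℂ be holomorphic, and let t be holomorphic on D ∖ {p} and meromorphic at p with a pole at p, satisfying t′(z) = P(z) − t(z)² for all z ∈ D ∖ {p}. Then the pole of t at p is simple with residue 1; that is, the function z ↦ t(z) − 1/(z − p) extends holomorphically to all of D. -/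
/-!
Extended by `0` at the pole, `U = 1 / t` is holomorphic near `p` (removable singularity theorem)
and solves `U' = 1 - P U²`. Since `U p = 0`, this gives `U' p = 1`, so `p` is a simple zero of `U`
with derivative `1`, i.e. a simple pole of `t` with residue `1`.
-/

open Complex Metric
open Filter Function
open scoped Topology

theorem AnalyticAt.dslope_self {𝕜 E : Type*} [NontriviallyNormedField 𝕜] [NormedAddCommGroup E]
    [NormedSpace 𝕜 E] {f : 𝕜 → E} {p : 𝕜} (hf : AnalyticAt 𝕜 f p) :
    AnalyticAt 𝕜 (dslope f p) p :=
  let ⟨_, hs⟩ := hf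
  ⟨_, hs.has_fpower_series_dslope_fslope⟩

theorem AnalyticAt.exists_inv_eq_inv_deriv_div_sub_add {𝕜 : Type*} [NontriviallyNormedField 𝕜]
    {U : 𝕜 → 𝕜} {p : 𝕜} (hU : AnalyticAt 𝕜 U p) (hU0 : U p = 0) (hU' : deriv U p ≠ 0) :
    ∃ h : 𝕜 → 𝕜, AnalyticAt 𝕜 h p ∧
      ∀ᶠ z in 𝓝[≠] p, (U z)⁻¹ = (deriv U p)⁻¹ / (z - p) + h z := by
  set v := dslope U p
  set w := dslope v p
  have hv : AnalyticAt 𝕜 v p := hU.dslope_self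
  have hvp : v p = deriv U p := dslope_same U p
  have hU_eq (z : 𝕜) : U z = (z - p) * v z := by
    rw [← smul_eq_mul, sub_smul_dslope, hU0, sub_zero]
  have hv_eq (z : 𝕜) : v z = deriv U p + (z - p) * w z := by
    rw [← hvp, ← smul_eq_mul, sub_smul_dslope, add_sub_cancel]
  refine ⟨fun z => -w z / (deriv U p * v z), hv.dslope_self.neg.div (analyticAt_const.mul hv)
    (by rw [hvp]; exact mul_ne_zero hU' hU'), ?_⟩
  filter_upwards [nhdsWithin_le_nhds (hv.continuousAt.eventually_ne (hvp ▸ hU')),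
    self_mem_nhdsWithin] with z hv0 (hzp : z ≠ p)
  have hzp0 : z - p ≠ 0 := sub_ne_zero.mpr hzp
  rw [hU_eq]
  field_simp
  rw [hv_eq]
  ring

theorem Complex.analyticAt_update_inv_of_tendsto_norm_atTop {f : ℂ → ℂ} {p : ℂ}
    (hd : ∀ᶠ z in 𝓝[≠] p, DifferentiableAt ℂ f z) (hf : Tendsto (‖f ·‖) (𝓝[≠] p) atTop) :
    AnalyticAt ℂ (update f⁻¹ p 0) p := by
  refine analyticAt_of_differentiable_on_punctured_nhds_of_continuousAt ?_ ?_
  · filter_upwards [hd, hf.eventually_ne_atTop 0, self_mem_nhdsWithin] with z hz hz0 (hzp : z ≠ p)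
    refine (hz.inv (norm_ne_zero_iff.mp hz0)).congr_of_eventuallyEq ?_
    filter_upwards [isOpen_ne.mem_nhds hzp] with y hy
    exact update_of_ne hy _ _
  · rw [continuousAt_update_same, tendsto_zero_iff_norm_tendsto_zero]
    simpa only [Pi.inv_apply, norm_inv, Pi.inv_def] using hf.inv_tendsto_atTop

theorem Complex.differentiableOn_update_of_tendsto {E : Type*} [NormedAddCommGroup E]
    [NormedSpace ℂ E] [CompleteSpace E] {f : ℂ → E} {s : Set ℂ} {c : ℂ} {a : E} (hs : s ∈ 𝓝 c)
    (hd : DifferentiableOn ℂ f (s \ {c})) (hf : Tendsto f (𝓝[≠] c) (𝓝 a)) :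
    DifferentiableOn ℂ (update f c a) s :=
  (differentiableOn_compl_singleton_and_continuousAt_iff hs).mp
    ⟨hd.congr fun _ hz => update_of_ne hz.2 _ _, continuousAt_update_same.mpr hf⟩

theorem HasDerivAt.inv_of_riccati {𝕜 : Type*} [NontriviallyNormedField 𝕜] {t P : 𝕜 → 𝕜} {z : 𝕜}
    (ht : HasDerivAt t (P z - t z ^ 2) z) (h0 : t z ≠ 0) :
    HasDerivAt t⁻¹ (1 - P z * (t z)⁻¹ ^ 2) z := by
  refine (ht.inv h0).congr_deriv ?_
  field_simp
  ring

theorem Complex.deriv_update_inv_eq_one_of_riccati {t P : ℂ → ℂ} {p : ℂ} (hP : ContinuousAt P p)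
    (hode : ∀ᶠ z in 𝓝[≠] p, HasDerivAt t (P z - t z ^ 2) z)
    (hpole : Tendsto (‖t ·‖) (𝓝[≠] p) atTop) :
    deriv (update t⁻¹ p 0) p = 1 := by
  set U := update t⁻¹ p 0
  have hU : AnalyticAt ℂ U p :=
    analyticAt_update_inv_of_tendsto_norm_atTop (hode.mono fun _ h => h.differentiableAt) hpole
  have hderiv : deriv U =ᶠ[𝓝[≠] p] fun z => 1 - P z * U z ^ 2 := by
    filter_upwards [hode, hpole.eventually_ne_atTop 0, self_mem_nhdsWithin]
      with z hz hz0 (hzp : z ≠ p)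
    have hUz : U =ᶠ[𝓝 z] t⁻¹ := by
      filter_upwards [isOpen_ne.mem_nhds hzp] with y hy
      exact update_of_ne hy _ _
    rw [hUz.deriv_eq, hUz.eq_of_nhds, (hz.inv_of_riccati (norm_ne_zero_iff.mp hz0)).deriv]
    rfl
  have hlim : Tendsto (fun z => 1 - P z * U z ^ 2) (𝓝 p) (𝓝 1) := by
    simpa [U] using tendsto_const_nhds.sub (hP.tendsto.mul (hU.continuousAt.tendsto.pow 2))
  exact tendsto_nhds_unique (hU.deriv.continuousAt.tendsto.mono_left nhdsWithin_le_nhds)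
    ((hlim.mono_left nhdsWithin_le_nhds).congr' hderiv.symm)

theorem riccati_pole_simple_residue_one_general
    (p : ℂ) (R : ℝ) (hR : 0 < R)
    (P : ℂ → ℂ) (hP : DifferentiableOn ℂ P (ball p R))
    (t : ℂ → ℂ)
    (hpole : Filter.Tendsto (fun z => ‖t z‖) (nhdsWithin p {p}ᶜ)
      Filter.atTop)
    (hode : ∀ z ∈ ball p R \ {p}, HasDerivAt t (P z - (t z) ^ 2) z) :
    ∃ g : ℂ → ℂ, DifferentiableOn ℂ g (ball p R) ∧
      ∀ z ∈ ball p R \ {p}, t z = 1 / (z - p) + g z := by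
  have hball : ball p R ∈ 𝓝 p := ball_mem_nhds p hR
  have hode' : ∀ᶠ z in 𝓝[≠] p, HasDerivAt t (P z - t z ^ 2) z :=
    eventually_nhdsWithin_iff.mpr (eventually_of_mem hball fun z hz hzp => hode z ⟨hz, hzp⟩)
  have hU := analyticAt_update_inv_of_tendsto_norm_atTop
    (hode'.mono fun _ h => h.differentiableAt) hpole
  have hU' := deriv_update_inv_eq_one_of_riccati (hP.differentiableAt hball).continuousAt hode' hpole
  obtain ⟨h, hh, heq⟩ :=
    hU.exists_inv_eq_inv_deriv_div_sub_add (update_self _ _ _) (hU' ▸ one_ne_zero)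
  have hlim : Tendsto (fun z => t z - 1 / (z - p)) (𝓝[≠] p) (𝓝 (h p)) := by
    refine (hh.continuousAt.tendsto.mono_left nhdsWithin_le_nhds).congr' ?_
    filter_upwards [heq, self_mem_nhdsWithin] with z hz (hzp : z ≠ p)
    rw [update_of_ne hzp, Pi.inv_apply, inv_inv, hU', inv_one] at hz
    rw [hz, add_sub_cancel_left]
  refine ⟨_, differentiableOn_update_of_tendsto hball (fun z hz => ?_) hlim, fun z hz => ?_⟩
  · exact ((hode z hz).differentiableAt.sub
      ((differentiableAt_const 1).div (differentiableAt_id.sub_const p) (sub_ne_zero.mpr hz.2)))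
      |>.differentiableWithinAt
  · rw [update_of_ne hz.2]
    ring

/-- **Poles of solutions of `t′ = P(z) − t²` are simple with residue 1.**
If `t` is holomorphic on a punctured disc `D ∖ {p}`, has a pole at `p`
(i.e. `|t(z)| → ∞` as `z → p`), and solves `t′ = P(z) − t²` there with `P`
holomorphic on `D`, then `t(z) − 1/(z − p)` extends holomorphically to `D`. -/
theorem riccati_pole_simple_residue_one
    (p : ℂ) (R : ℝ) (hR : 0 < R)
    (P : ℂ → ℂ) (hP : DifferentiableOn ℂ P (ball p R))
    (t : ℂ → ℂ)
    (ht : DifferentiableOn ℂ t (ball p R \ {p}))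
    (hpole : Filter.Tendsto (fun z => ‖t z‖) (nhdsWithin p {p}ᶜ)
      Filter.atTop)
    (hode : ∀ z ∈ ball p R \ {p}, HasDerivAt t (P z - (t z) ^ 2) z) :
    ∃ g : ℂ → ℂ, DifferentiableOn ℂ g (ball p R) ∧
      ∀ z ∈ ball p R \ {p}, t z = 1 / (z - p) + g z :=
  riccati_pole_simple_residue_one_general p R hR P hP t hpole hode
end

section
/- Let U ⊆ ℂ be open and let t : U → ℂ be a holomorphic solution of the Riccati equation t′ = z − t² with t(z) ≠ z for all z ∈ U. Then the function w(z) := t(z)²/(t(z) − z) satisfies the first-order algebraic differential equation z²·w′² + ((2z − 4z²)·w − (1 − z)·w²)·w′ + (4z³·w + (1 − z² + 8z³)·w² + (4z − 6z² + 4z³)·w³ − (1 − z + z²)·w⁴) = 0 on U. -/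
/-!
Along a solution of `t′ = z − t²`, the derivative of `w = t²/(t − z)` is, by the quotient rule,
a rational function of `z` and `t` alone. Eliminating `t` between this expression and
`w·(t − z) = t²` gives a polynomial relation between `z`, `w` and `w′`, quadratic in `w′`:
the theorem is the quotient rule followed by this identity of rational functions.
-/

open Complex

/-- The transformed function `w = t²/(t − z)` of Example 7. -/
noncomputable def riccatiTransform (t : ℂ → ℂ) : ℂ → ℂ :=
  fun z => (t z) ^ 2 / (t z - z)

theorem HasDerivAt.riccatiTransform {t : ℂ → ℂ} {t' z : ℂ} (ht : HasDerivAt t t' z)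
    (hz : t z ≠ z) :
    HasDerivAt (riccatiTransform t)
      ((2 * t z * t' * (t z - z) - t z ^ 2 * (t' - 1)) / (t z - z) ^ 2) z := by
  have hsq : HasDerivAt (fun x => t x ^ 2) (2 * t z * t') z := by
    simpa using ht.fun_pow 2
  exact hsq.div (ht.sub (hasDerivAt_id z)) (sub_ne_zero.mpr hz)

def degreeTwoODE {K : Type*} [Field K] (z w w' : K) : K :=
  z ^ 2 * w' ^ 2 + ((2 * z - 4 * z ^ 2) * w - (1 - z) * w ^ 2) * w'
    + (4 * z ^ 3 * w + (1 - z ^ 2 + 8 * z ^ 3) * w ^ 2 + (4 * z - 6 * z ^ 2 + 4 * z ^ 3) * w ^ 3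
      - (1 - z + z ^ 2) * w ^ 4)

-- `a` stands for `t(z)` and `z - a ^ 2` for `t′(z)`.
theorem degreeTwoODE_riccatiTransform {K : Type*} [Field K] {z a : K} (ha : a ≠ z) :
    degreeTwoODE z (a ^ 2 / (a - z))
      ((2 * a * (z - a ^ 2) * (a - z) - a ^ 2 * (z - a ^ 2 - 1)) / (a - z) ^ 2) = 0 := by
  have hden : a - z ≠ 0 := sub_ne_zero.mpr ha
  unfold degreeTwoODE
  field_simp
  ring

theorem riccati_transform_satisfies_degree_two_ode_general
    (U : Set ℂ)
    (t : ℂ → ℂ)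
    (hode : ∀ z ∈ U, HasDerivAt t (z - (t z) ^ 2) z)
    (hne : ∀ z ∈ U, t z ≠ z) :
    ∀ z ∈ U,
      z ^ 2 * (deriv (riccatiTransform t) z) ^ 2
        + ((2 * z - 4 * z ^ 2) * riccatiTransform t z
            - (1 - z) * (riccatiTransform t z) ^ 2) * deriv (riccatiTransform t) z
        + (4 * z ^ 3 * riccatiTransform t z
            + (1 - z ^ 2 + 8 * z ^ 3) * (riccatiTransform t z) ^ 2
            + (4 * z - 6 * z ^ 2 + 4 * z ^ 3) * (riccatiTransform t z) ^ 3
            - (1 - z + z ^ 2) * (riccatiTransform t z) ^ 4) = 0 := by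
  intro z hz
  rw [((hode z hz).riccatiTransform (hne z hz)).deriv]
  exact degreeTwoODE_riccatiTransform (hne z hz)

/-- If `t` solves `t′ = z − t²` on an open set `U` with `t(z) ≠ z` on `U`,
then `w = t²/(t − z)` solves
`z²·w′² + ((2z − 4z²)·w − (1 − z)·w²)·w′ + (4z³·w + (1 − z² + 8z³)·w²
  + (4z − 6z² + 4z³)·w³ − (1 − z + z²)·w⁴) = 0` on `U`. -/
theorem riccati_transform_satisfies_degree_two_ode
    (U : Set ℂ) (hU : IsOpen U)
    (t : ℂ → ℂ)
    (hode : ∀ z ∈ U, HasDerivAt t (z - (t z) ^ 2) z)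
    (hne : ∀ z ∈ U, t z ≠ z) :
    ∀ z ∈ U,
      z ^ 2 * (deriv (riccatiTransform t) z) ^ 2
        + ((2 * z - 4 * z ^ 2) * riccatiTransform t z
            - (1 - z) * (riccatiTransform t z) ^ 2) * deriv (riccatiTransform t) z
        + (4 * z ^ 3 * riccatiTransform t z
            + (1 - z ^ 2 + 8 * z ^ 3) * (riccatiTransform t z) ^ 2
            + (4 * z - 6 * z ^ 2 + 4 * z ^ 3) * (riccatiTransform t z) ^ 3
            - (1 - z + z ^ 2) * (riccatiTransform t z) ^ 4) = 0 :=
  riccati_transform_satisfies_degree_two_ode_general U t hode hne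
end

section
/- Let f be a meromorphic function on ℂ satisfying f′(z) = 1 − f(z)² at every point z that is not a pole of f. Then either f is identically 1, or f is identically −1, or there exists ζ₀ ∈ ℂ such that f(z) = coth(z − ζ₀) = cosh(z − ζ₀)/sinh(z − ζ₀) at every non-pole point z. -/
/-!
Two solutions of `f′ = 1 − f²` that agree at a point where both are holomorphic agree nearby: the
real-time Picard–Lindelöf uniqueness theorem along the horizontal line through the point gives
agreement on a set with an accumulation point, and the identity theorem spreads it. Meromorphic
functions on `ℂ` that agree near one point agree near every point, so a solution is pinned down by
one value `f z₀`. The constants `±1` and the translates `coth (z − ζ₀)` are solutions, and the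
latter take every value other than `±1` at `z₀` (solve `e^{2u} = (c + 1)/(c − 1)`). A translate of
`coth` is compared with `f` through `f · sinh (z − ζ₀)` and `cosh (z − ζ₀)`, which are continuous
wherever `f` is; this shows at the same time that `f` has a pole at every zero of `sinh (z − ζ₀)`.
-/

open Complex Filter Set Topology

section IdentityTheorem

variable {𝕜 : Type*} [NontriviallyNormedField 𝕜] {E : Type*} [NormedAddCommGroup E]
  [NormedSpace 𝕜 E] {f g : 𝕜 → E} {U : Set 𝕜} {x y : 𝕜}

theorem MeromorphicOn.eventuallyEq_nhdsNE_of_isPreconnected (hf : MeromorphicOn f U)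
    (hg : MeromorphicOn g U) (hU : IsPreconnected U) (hx : x ∈ U) (hy : y ∈ U)
    (h : f =ᶠ[𝓝[≠] x] g) : f =ᶠ[𝓝[≠] y] g := by
  rw [eventuallyEq_iff_sub] at h ⊢
  by_contra hne
  exact (hf.sub hg).meromorphicOrderAt_ne_top_of_isPreconnected hU hy hx
    (mt meromorphicOrderAt_eq_top_iff.1 hne) (meromorphicOrderAt_eq_top_iff.2 h)

theorem MeromorphicOn.eq_of_eventuallyEq_of_isPreconnected (hf : MeromorphicOn f U)
    (hg : MeromorphicOn g U) (hU : IsPreconnected U) (hx : x ∈ U) (hy : y ∈ U)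
    (h : f =ᶠ[𝓝 x] g) (hfy : ContinuousAt f y) (hgy : ContinuousAt g y) : f y = g y :=
  tendsto_nhds_unique_of_eventuallyEq (hfy.tendsto.mono_left nhdsWithin_le_nhds)
    (hgy.tendsto.mono_left nhdsWithin_le_nhds)
    (hf.eventuallyEq_nhdsNE_of_isPreconnected hg hU hx hy (h.filter_mono nhdsWithin_le_nhds))

end IdentityTheorem

section AutonomousODE

variable {E : Type*} [NormedAddCommGroup E] [NormedSpace ℂ E] {f g : ℂ → E} {F : E → E} {z₀ : ℂ}

theorem tendsto_add_ofReal_nhds : Tendsto (fun t : ℝ ↦ z₀ + t) (𝓝 0) (𝓝 z₀) :=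
  (continuous_const.add continuous_ofReal : Continuous fun t : ℝ ↦ z₀ + t).tendsto' 0 z₀ (by simp)

theorem eventually_hasDerivAt_comp_add_ofReal
    (hf : ∀ᶠ z in 𝓝 z₀, HasDerivAt f (F (f z)) z) :
    ∀ᶠ t : ℝ in 𝓝 0, HasDerivAt (fun t : ℝ ↦ f (z₀ + t)) (F (f (z₀ + t))) t := by
  filter_upwards [tendsto_add_ofReal_nhds.eventually hf] with t ht
  simpa [Function.comp_def] using
    ht.scomp (t : ℝ) (((hasDerivAt_id (t : ℂ)).comp_ofReal).const_add z₀)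

theorem tendsto_add_ofReal_nhdsNE : Tendsto (fun t : ℝ ↦ z₀ + t) (𝓝[≠] 0) (𝓝[≠] z₀) := by
  refine tendsto_nhdsWithin_of_tendsto_nhds_of_eventually_within _ ?_ ?_
  · exact tendsto_add_ofReal_nhds.mono_left nhdsWithin_le_nhds
  · filter_upwards [self_mem_nhdsWithin] with t ht
    simpa using ht

variable [CompleteSpace E]

theorem Complex.ODE_solution_unique_of_eventually (hF : ContDiffAt ℝ 1 F (f z₀))
    (hf : ∀ᶠ z in 𝓝 z₀, HasDerivAt f (F (f z)) z) (hg : ∀ᶠ z in 𝓝 z₀, HasDerivAt g (F (g z)) z)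
    (heq : f z₀ = g z₀) : f =ᶠ[𝓝 z₀] g := by
  obtain ⟨K, s, hs, hF⟩ := hF.exists_lipschitzOnWith
  have hfa : AnalyticAt ℂ f z₀ :=
    analyticAt_iff_eventually_differentiableAt.2 (hf.mono fun _ h ↦ h.differentiableAt)
  have hga : AnalyticAt ℂ g z₀ :=
    analyticAt_iff_eventually_differentiableAt.2 (hg.mono fun _ h ↦ h.differentiableAt)
  have hfs : ∀ᶠ z in 𝓝 z₀, f z ∈ s := hfa.continuousAt.eventually_mem hs
  have hgs : ∀ᶠ z in 𝓝 z₀, g z ∈ s := hga.continuousAt.eventually_mem (heq ▸ hs)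
  have hline : (fun t : ℝ ↦ f (z₀ + t)) =ᶠ[𝓝 0] fun t : ℝ ↦ g (z₀ + t) :=
    _root_.ODE_solution_unique_of_eventually (v := fun _ ↦ F) (s := fun _ ↦ s)
      (Eventually.of_forall fun _ ↦ hF)
      ((eventually_hasDerivAt_comp_add_ofReal hf).and (tendsto_add_ofReal_nhds.eventually hfs))
      ((eventually_hasDerivAt_comp_add_ofReal hg).and (tendsto_add_ofReal_nhds.eventually hgs))
      (by simpa using heq)
  exact (hfa.frequently_eq_iff_eventually_eq hga).1 <|
    tendsto_add_ofReal_nhdsNE.frequently (hline.filter_mono nhdsWithin_le_nhds).frequently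

end AutonomousODE

namespace Complex

theorem cosh_ne_zero_of_sinh_eq_zero {u : ℂ} (h : sinh u = 0) : cosh u ≠ 0 := by
  intro h'
  simpa [h, h'] using cosh_sq_sub_sinh_sq u

theorem exists_cosh_eq_mul_sinh {c : ℂ} (h₁ : c ≠ 1) (h₂ : c ≠ -1) :
    ∃ u, cosh u = c * sinh u := by
  have hc : c - 1 ≠ 0 := sub_ne_zero.2 h₁
  have ha : (c + 1) / (c - 1) ≠ 0 := div_ne_zero (by contrapose! h₂; linear_combination h₂) hc
  refine ⟨log ((c + 1) / (c - 1)) / 2, ?_⟩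
  generalize hu : log ((c + 1) / (c - 1)) / 2 = u
  have hexp : exp u * exp u * (c - 1) = c + 1 := by
    rw [← exp_add, ← hu, add_halves, exp_log ha, div_mul_cancel₀ _ hc]
  have hinv : exp u * (exp u)⁻¹ = 1 := mul_inv_cancel₀ (exp_ne_zero u)
  have h2c := two_cosh u
  have h2s := two_sinh u
  rw [exp_neg] at h2c h2s
  linear_combination (1 / 2 : ℂ) * h2c - c / 2 * h2s - (exp u)⁻¹ / 2 * hexp
    + exp u * (c - 1) / 2 * hinv

theorem hasDerivAt_cosh_div_sinh {u : ℂ} (h : sinh u ≠ 0) :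
    HasDerivAt (fun u ↦ cosh u / sinh u) (1 - (cosh u / sinh u) ^ 2) u := by
  refine ((hasDerivAt_cosh u).fun_div (hasDerivAt_sinh u) h).congr_deriv ?_
  field_simp

end Complex

theorem eq_cosh_sub_div_sinh_sub_of_eventuallyEq {f : ℂ → ℂ} {z₀ ζ z : ℂ}
    (hf : MeromorphicOn f univ) (hζ : sinh (z₀ - ζ) ≠ 0)
    (h : f =ᶠ[𝓝 z₀] fun w ↦ cosh (w - ζ) / sinh (w - ζ)) (hz : ContinuousAt f z) :
    f z = cosh (z - ζ) / sinh (z - ζ) := by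
  have hsinh : MeromorphicOn (fun w ↦ sinh (w - ζ)) univ := fun w _ ↦
    (Differentiable.analyticAt (by fun_prop) w).meromorphicAt
  have hcosh : MeromorphicOn (fun w ↦ cosh (w - ζ)) univ := fun w _ ↦
    (Differentiable.analyticAt (by fun_prop) w).meromorphicAt
  have hmul : (fun w ↦ f w * sinh (w - ζ)) =ᶠ[𝓝 z₀] fun w ↦ cosh (w - ζ) := by
    have hsinh_ne : ∀ᶠ w in 𝓝 z₀, sinh (w - ζ) ≠ 0 :=
      (by fun_prop : Continuous fun w ↦ sinh (w - ζ)).continuousAt.eventually_ne hζ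
    filter_upwards [h, hsinh_ne] with w hw hw'
    rw [hw, div_mul_cancel₀ _ hw']
  have hz' : f z * sinh (z - ζ) = cosh (z - ζ) :=
    (hf.mul hsinh).eq_of_eventuallyEq_of_isPreconnected hcosh isPreconnected_univ trivial trivial
      hmul (hz.mul (by fun_prop)) (by fun_prop)
  have hs : sinh (z - ζ) ≠ 0 := fun h₀ ↦
    cosh_ne_zero_of_sinh_eq_zero h₀ (by rw [← hz', h₀, mul_zero])
  rw [← hz', mul_div_cancel_right₀ _ hs]

/-- **Classification of meromorphic solutions of `f′ = 1 − f²`.**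
Every meromorphic function on `ℂ` satisfying `f′ = 1 − f²` at each non-pole
point is identically `1`, identically `−1`, or a translate
`f(z) = coth(z − ζ₀) = cosh(z − ζ₀)/sinh(z − ζ₀)` of the hyperbolic
cotangent. -/
theorem meromorphic_solutions_of_autonomous_riccati
    (f : ℂ → ℂ) (hf : MeromorphicOn f Set.univ)
    (hode : ∀ z : ℂ, AnalyticAt ℂ f z → HasDerivAt f (1 - (f z) ^ 2) z) :
    (∀ z : ℂ, AnalyticAt ℂ f z → f z = 1) ∨
    (∀ z : ℂ, AnalyticAt ℂ f z → f z = -1) ∨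
    (∃ ζ₀ : ℂ, ∀ z : ℂ, AnalyticAt ℂ f z →
      f z = Complex.cosh (z - ζ₀) / Complex.sinh (z - ζ₀)) := by
  obtain ⟨z₀, hz₀⟩ : ∃ z, AnalyticAt ℂ f z := (hf 0 trivial).eventually_analyticAt.exists
  have hfd : ∀ᶠ z in 𝓝 z₀, HasDerivAt f (1 - f z ^ 2) z := hz₀.eventually_analyticAt.mono hode
  have hF : ContDiffAt ℝ 1 (fun y : ℂ ↦ 1 - y ^ 2) (f z₀) := by fun_prop
  have hconst (c : ℂ) (hc : c ^ 2 = 1) (hfc : f z₀ = c) (z : ℂ) (hz : AnalyticAt ℂ f z) :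
      f z = c := by
    have hsol : f =ᶠ[𝓝 z₀] fun _ ↦ c :=
      Complex.ODE_solution_unique_of_eventually hF hfd
        (Eventually.of_forall fun w ↦ (hasDerivAt_const w c).congr_deriv (by simp [hc])) hfc
    exact hf.eq_of_eventuallyEq_of_isPreconnected (MeromorphicOn.const c) isPreconnected_univ
      trivial trivial hsol hz.continuousAt continuousAt_const
  by_cases h₁ : f z₀ = 1
  · exact Or.inl (hconst 1 (one_pow 2) h₁)
  by_cases h₂ : f z₀ = -1
  · exact Or.inr (Or.inl (hconst (-1) (by norm_num) h₂))
  obtain ⟨u, hu⟩ := exists_cosh_eq_mul_sinh h₁ h₂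
  have hsinh : sinh u ≠ 0 := fun h ↦ cosh_ne_zero_of_sinh_eq_zero h (by rw [hu, h, mul_zero])
  have hζ : z₀ - (z₀ - u) = u := sub_sub_cancel z₀ u
  have hsol : f =ᶠ[𝓝 z₀] fun w ↦ cosh (w - (z₀ - u)) / sinh (w - (z₀ - u)) := by
    refine Complex.ODE_solution_unique_of_eventually hF hfd ?_ ?_
    · have hsinh_ne : ∀ᶠ w in 𝓝 z₀, sinh (w - (z₀ - u)) ≠ 0 :=
        (by fun_prop : Continuous fun w ↦ sinh (w - (z₀ - u))).continuousAt.eventually_ne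
          (by rwa [hζ])
      filter_upwards [hsinh_ne] with w hw
      exact (hasDerivAt_cosh_div_sinh hw).comp_sub_const w (z₀ - u)
    · rw [hζ, hu, mul_div_cancel_right₀ _ hsinh]
  exact Or.inr (Or.inr ⟨z₀ - u, fun z hz ↦
    eq_cosh_sub_div_sinh_sub_of_eventuallyEq hf (by rwa [hζ]) hsol hz.continuousAt⟩)
end
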